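/- Suppose E[κ_X(X,X)] < ∞, E[κ_Y(Y,Y)] < ∞, E[κ_Z(Z,Z)] < ∞, and that for every g ∈ G_X the function z ↦ E[g(X)|Z=z] has a version in G_Z, and for every g ∈ G_Y the function z ↦ E[g(Y)|Z=z] has a version in G_Z. Then the conditional covariance operator Σ_{XY|Z} = Σ_XY − Σ_XZ Σ_ZZ^† Σ_ZY admits the representation Σ_{XY|Z} = E[(κ̃_X(·,X) − E[κ̃_X(·,X)|Z]) ⊗ (κ̃_Y(·,Y) − E[κ̃_Y(·,Y)|Z])]. -/

import Mathlib

/-!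
# Statement 3

Under the moment and conditional-expectation assumptions, the conditional
covariance operator `Σ_{XY|Z} = Σ_XY − Σ_XZ Σ_ZZ^† Σ_ZY` admits the
representation
`Σ_{XY|Z} = E[(κ̃_X(·,X) − E[κ̃_X(·,X)|Z]) ⊗ (κ̃_Y(·,Y) − E[κ̃_Y(·,Y)|Z])]`.
RKHSs are modelled through feature maps, the Moore–Penrose inverse through
the Penrose axioms, and the operator identity is stated pointwise.
-/

open MeasureTheory ProbabilityTheory Filter
open scoped RealInnerProductSpace

noncomputable section

/-- The rank-one operator `u ⊗ v : H₂ → H₁`, `w ↦ ⟪v, w⟫ u`. -/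
def rankOne {H1 H2 : Type*} [NormedAddCommGroup H1] [InnerProductSpace ℝ H1]
    [NormedAddCommGroup H2] [InnerProductSpace ℝ H2] (u : H1) (v : H2) : H2 →L[ℝ] H1 :=
  (innerSL ℝ v).smulRight u

variable {Ω : Type*} [MeasurableSpace Ω]

/-- The mean element `μ = E[k(·,X)] ∈ G` (Bochner integral). -/
def meanElem {H G : Type*} [NormedAddCommGroup G] [InnerProductSpace ℝ G] [CompleteSpace G]
    (P : Measure Ω) (k : H → G) (X : Ω → H) : G :=
  ∫ ω, k (X ω) ∂P

/-- The centered kernel section `κ̃(·,x) = κ(·,x) − μ`. -/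
def ctrKer {H G : Type*} [NormedAddCommGroup G] [InnerProductSpace ℝ G] [CompleteSpace G]
    (P : Measure Ω) (k : H → G) (X : Ω → H) (x : H) : G :=
  k x - meanElem P k X

/-- The (cross-)covariance operator `Σ_{XZ} = E[κ̃_X(·,X) ⊗ κ̃_Z(·,Z)] : G₂ → G₁`. -/
def crossCov {H1 G1 H2 G2 : Type*}
    [NormedAddCommGroup G1] [InnerProductSpace ℝ G1] [CompleteSpace G1]
    [NormedAddCommGroup G2] [InnerProductSpace ℝ G2] [CompleteSpace G2]
    (P : Measure Ω) (k1 : H1 → G1) (X : Ω → H1) (k2 : H2 → G2) (Z : Ω → H2) :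
    G2 →L[ℝ] G1 :=
  ∫ ω, rankOne (ctrKer P k1 X (X ω)) (ctrKer P k2 Z (Z ω)) ∂P

/-- The Penrose axioms characterizing the Moore–Penrose inverse `dag` of a
self-adjoint operator `C`. -/
def IsMoorePenroseInv {G : Type*} [NormedAddCommGroup G] [InnerProductSpace ℝ G]
    (C : G →L[ℝ] G) (dag : G →ₗ[ℝ] G) : Prop :=
  (∀ f, C (dag (C f)) = C f) ∧ (∀ f, dag (C (dag f)) = dag f) ∧
    (∀ f g, ⟪C (dag f), g⟫ = ⟪f, C (dag g)⟫) ∧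
    (∀ f g, ⟪dag (C f), g⟫ = ⟪f, dag (C g)⟫)

/-!
Write `φ, ψ, ζ` for the centered features of `X, Y, Z` and `m = σ(Z)`. Testing against
`f ∈ G_X`, `v ∈ G_Y`, everything reduces to the real random variables `F = ⟪φ, f⟫` and
`G = ⟪ψ, v⟫`. The hypotheses provide `r_f, r_v ∈ G_Z` with `E[F | Z] = ⟪ζ, r_f⟫` and
`E[G | Z] = ⟪ζ, r_v⟫`; pulling out `Z`-measurable factors gives `Σ_ZX f = Σ_ZZ r_f` and
`Σ_ZY v = Σ_ZZ r_v`, so the first Penrose identity `Σ_ZZ Σ_ZZ^† Σ_ZZ = Σ_ZZ` turns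
`⟪f, Σ_XZ Σ_ZZ^† Σ_ZY v⟫` into `E[E[F | Z] E[G | Z]]`. The right-hand side is
`E[(F - E[F | Z]) (G - E[G | Z])] = E[F G] - E[E[F | Z] E[G | Z]]` by orthogonality of
`L²(m)` and its complement.
-/

section Conditioning

variable {α : Type*} {m mα : MeasurableSpace α} {P : Measure α}

lemma integral_mul_condExp_of_stronglyMeasurable (hm : m ≤ mα) [IsFiniteMeasure P]
    {A B : α → ℝ} (hA : StronglyMeasurable[m] A) (hA2 : MemLp A 2 P) (hB2 : MemLp B 2 P) :
    ∫ ω, A ω * B ω ∂P = ∫ ω, A ω * P[B | m] ω ∂P :=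
  calc ∫ ω, A ω * B ω ∂P = ∫ ω, P[A * B | m] ω ∂P := (integral_condExp hm).symm
    _ = ∫ ω, A ω * P[B | m] ω ∂P :=
      integral_congr_ae (condExp_mul_of_stronglyMeasurable_left hA (hA2.integrable_mul hB2)
        (hB2.integrable one_le_two))

lemma integral_sub_condExp_mul_sub_condExp (hm : m ≤ mα) [IsFiniteMeasure P]
    {F G : α → ℝ} (hF : MemLp F 2 P) (hG : MemLp G 2 P) :
    ∫ ω, (F ω - P[F | m] ω) * (G ω - P[G | m] ω) ∂P
      = ∫ ω, F ω * G ω ∂P - ∫ ω, P[F | m] ω * P[G | m] ω ∂P := by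
  have hF' : MemLp P[F | m] 2 P := hF.condExp one_le_two
  have hG' : MemLp P[G | m] 2 P := hG.condExp one_le_two
  have eF'G : ∫ ω, P[F | m] ω * G ω ∂P = ∫ ω, P[F | m] ω * P[G | m] ω ∂P :=
    integral_mul_condExp_of_stronglyMeasurable hm stronglyMeasurable_condExp hF' hG
  have eFG' : ∫ ω, F ω * P[G | m] ω ∂P = ∫ ω, P[F | m] ω * P[G | m] ω ∂P := by
    simp_rw [mul_comm (F _), mul_comm (P[F | m] _)]
    exact integral_mul_condExp_of_stronglyMeasurable hm stronglyMeasurable_condExp hG' hF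
  have hexpand : (fun ω => (F ω - P[F | m] ω) * (G ω - P[G | m] ω))
      = fun ω => (F ω * G ω - P[F | m] ω * G ω) - (F ω * P[G | m] ω - P[F | m] ω * P[G | m] ω) := by
    ext ω; ring
  have iFG : Integrable (fun ω => F ω * G ω) P := hF.integrable_mul hG
  have iF'G : Integrable (fun ω => P[F | m] ω * G ω) P := hF'.integrable_mul hG
  have iFG' : Integrable (fun ω => F ω * P[G | m] ω) P := hF.integrable_mul hG'
  have iF'G' : Integrable (fun ω => P[F | m] ω * P[G | m] ω) P := hF'.integrable_mul hG'
  rw [hexpand, integral_sub, integral_sub, integral_sub, eF'G, eFG']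
  · ring
  exacts [iFG', iF'G', iFG, iF'G, iFG.sub iF'G, iFG'.sub iF'G']

section Hilbert

variable {G1 G2 : Type*}
  [NormedAddCommGroup G1] [InnerProductSpace ℝ G1] [NormedAddCommGroup G2] [InnerProductSpace ℝ G2]

lemma memLp_two_of_integrable_inner_self {f : α → G1} (hf : AEStronglyMeasurable f P)
    (h : Integrable (fun ω => ⟪f ω, f ω⟫) P) : MemLp f 2 P := by
  rw [memLp_two_iff_integrable_sq_norm hf]
  exact h.congr (ae_of_all _ fun ω => real_inner_self_eq_norm_sq _)

lemma norm_rankOne_le (u : G1) (v : G2) : ‖rankOne u v‖ ≤ ‖u‖ * ‖v‖ := by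
  rw [rankOne, ContinuousLinearMap.norm_smulRight_apply, innerSL_apply_norm, mul_comm]

lemma continuous_rankOne : Continuous fun p : G1 × G2 => rankOne p.1 p.2 :=
  ((ContinuousLinearMap.smulRightL ℝ G2 G1).continuous.comp
    ((innerSL ℝ).continuous.comp continuous_snd)).clm_apply continuous_fst

lemma integrable_rankOne [IsFiniteMeasure P] {φ : α → G1} {ψ : α → G2}
    (hφ : MemLp φ 2 P) (hψ : MemLp ψ 2 P) : Integrable (fun ω => rankOne (φ ω) (ψ ω)) P :=
  (hφ.norm.integrable_mul hψ.norm).mono'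
    (continuous_rankOne.comp_aestronglyMeasurable
      (hφ.aestronglyMeasurable.prodMk hψ.aestronglyMeasurable))
    (ae_of_all _ fun _ => norm_rankOne_le _ _)

variable [CompleteSpace G1]

lemma inner_condExp_ae_eq {φ : α → G1} (hφ : Integrable φ P) (c : G1) :
    (fun ω => ⟪P[φ | m] ω, c⟫) =ᵐ[P] P[fun ω => ⟪φ ω, c⟫ | m] := by
  simpa only [Function.comp_def, innerSL_apply_apply, real_inner_comm c]
    using (innerSL ℝ c).comp_condExp_comm hφ (m := m)

lemma inner_integral_rankOne_apply [IsFiniteMeasure P] {φ : α → G1} {ψ : α → G2}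
    (hφ : MemLp φ 2 P) (hψ : MemLp ψ 2 P) (f : G1) (w : G2) :
    ⟪f, (∫ ω, rankOne (φ ω) (ψ ω) ∂P) w⟫ = ∫ ω, ⟪φ ω, f⟫ * ⟪ψ ω, w⟫ ∂P := by
  have hint := integrable_rankOne hφ hψ
  rw [ContinuousLinearMap.integral_apply hint, ← integral_inner (hint.apply_continuousLinearMap w)]
  simp only [rankOne, ContinuousLinearMap.smulRight_apply, innerSL_apply_apply,
    real_inner_smul_right, real_inner_comm f, mul_comm]

variable [CompleteSpace G2]

lemma inner_integral_rankOne_sub_condExp_apply (hm : m ≤ mα) [IsFiniteMeasure P]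
    {φ : α → G1} {ψ : α → G2} (hφ : MemLp φ 2 P) (hψ : MemLp ψ 2 P) (f : G1) (w : G2) :
    ⟪f, (∫ ω, rankOne (φ ω - P[φ | m] ω) (ψ ω - P[ψ | m] ω) ∂P) w⟫
      = ∫ ω, ⟪φ ω, f⟫ * ⟪ψ ω, w⟫ ∂P
        - ∫ ω, P[fun ω => ⟪φ ω, f⟫ | m] ω * P[fun ω => ⟪ψ ω, w⟫ | m] ω ∂P := by
  have hφ' : MemLp (fun ω => φ ω - P[φ | m] ω) 2 P := hφ.sub (hφ.condExp one_le_two)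
  have hψ' : MemLp (fun ω => ψ ω - P[ψ | m] ω) 2 P := hψ.sub (hψ.condExp one_le_two)
  rw [inner_integral_rankOne_apply hφ' hψ', ← integral_sub_condExp_mul_sub_condExp hm
    (hφ.inner_const f) (hψ.inner_const w)]
  refine integral_congr_ae ?_
  filter_upwards [inner_condExp_ae_eq (m := m) (hφ.integrable one_le_two) f,
    inner_condExp_ae_eq (m := m) (hψ.integrable one_le_two) w] with ω hφω hψω
  rw [inner_sub_left, inner_sub_left, hφω, hψω]

end Hilbert

section Features

variable {H1 H2 G1 G2 : Type*}
  [NormedAddCommGroup G1] [InnerProductSpace ℝ G1] [CompleteSpace G1]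
  [NormedAddCommGroup G2] [InnerProductSpace ℝ G2] [CompleteSpace G2]
  {k1 : H1 → G1} {X : α → H1} {k2 : H2 → G2} {Z : α → H2}

lemma memLp_ctrKer [IsFiniteMeasure P] (h : MemLp (fun ω => k1 (X ω)) 2 P) :
    MemLp (fun ω => ctrKer P k1 X (X ω)) 2 P :=
  h.sub (memLp_const _)

lemma inner_crossCov_apply [IsFiniteMeasure P] (h1 : MemLp (fun ω => k1 (X ω)) 2 P)
    (h2 : MemLp (fun ω => k2 (Z ω)) 2 P) (f : G1) (w : G2) :
    ⟪f, crossCov P k1 X k2 Z w⟫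
      = ∫ ω, ⟪ctrKer P k1 X (X ω), f⟫ * ⟪ctrKer P k2 Z (Z ω), w⟫ ∂P :=
  inner_integral_rankOne_apply (memLp_ctrKer h1) (memLp_ctrKer h2) f w

lemma inner_crossCov_comm [IsFiniteMeasure P] (h1 : MemLp (fun ω => k1 (X ω)) 2 P)
    (h2 : MemLp (fun ω => k2 (Z ω)) 2 P) (f : G1) (w : G2) :
    ⟪f, crossCov P k1 X k2 Z w⟫ = ⟪crossCov P k2 Z k1 X f, w⟫ := by
  rw [inner_crossCov_apply h1 h2, real_inner_comm, inner_crossCov_apply h2 h1]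
  simp_rw [mul_comm]

lemma inner_ctrKer_ae_eq_condExp (hm : m ≤ mα) [IsFiniteMeasure P]
    (h1 : Integrable (fun ω => k1 (X ω)) P) (h2 : Integrable (fun ω => k2 (Z ω)) P)
    {g : G1} {h : G2}
    (hrep : (fun ω => ⟪k2 (Z ω), h⟫) =ᵐ[P] P[fun ω => ⟪k1 (X ω), g⟫ | m]) :
    (fun ω => ⟪ctrKer P k2 Z (Z ω), h⟫) =ᵐ[P] P[fun ω => ⟪ctrKer P k1 X (X ω), g⟫ | m] := by
  have hmean : ⟪meanElem P k2 Z, h⟫ = ⟪meanElem P k1 X, g⟫ := by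
    rw [meanElem, meanElem, real_inner_comm, ← integral_inner h2, real_inner_comm,
      ← integral_inner h1]
    simp_rw [real_inner_comm _ h, real_inner_comm _ g]
    rw [integral_congr_ae hrep, integral_condExp hm]
  have hsplit : (fun ω => ⟪ctrKer P k1 X (X ω), g⟫)
      = (fun ω => ⟪k1 (X ω), g⟫) - fun _ => ⟪meanElem P k1 X, g⟫ := by
    ext ω; simp only [ctrKer, inner_sub_left, Pi.sub_apply]
  have hint : Integrable (fun ω => ⟪k1 (X ω), g⟫) P := h1.inner_const g
  rw [hsplit]
  filter_upwards [condExp_sub hint (integrable_const _) m, hrep] with ω hsub hω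
  rw [hsub, condExp_const hm, Pi.sub_apply, ← hω, ← hmean, ctrKer, inner_sub_left]

lemma crossCov_eq_of_inner_ae_eq_condExp (hm : m ≤ mα) [IsFiniteMeasure P]
    (h1 : MemLp (fun ω => k1 (X ω)) 2 P) (h2 : MemLp (fun ω => k2 (Z ω)) 2 P)
    (h2m : StronglyMeasurable[m] fun ω => k2 (Z ω)) {g : G1} {h : G2}
    (hrep : (fun ω => ⟪ctrKer P k2 Z (Z ω), h⟫) =ᵐ[P]
      P[fun ω => ⟪ctrKer P k1 X (X ω), g⟫ | m]) :
    crossCov P k2 Z k1 X g = crossCov P k2 Z k2 Z h := by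
  refine ext_inner_left ℝ fun u => ?_
  rw [inner_crossCov_apply h2 h1, inner_crossCov_apply h2 h2]
  refine (integral_mul_condExp_of_stronglyMeasurable hm
      ((h2m.sub stronglyMeasurable_const).inner stronglyMeasurable_const)
      ((memLp_ctrKer h2).inner_const u) ((memLp_ctrKer h1).inner_const g)).trans
    (integral_congr_ae ?_)
  filter_upwards [hrep] with ω hω
  exact congrArg (⟪ctrKer P k2 Z (Z ω), u⟫ * ·) hω.symm

end Features

end Conditioning

theorem statement3_general
    (P : Measure Ω) [IsProbabilityMeasure P]
    {HX HY HZ GX GY GZ : Type*}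
    [MeasurableSpace HX] [MeasurableSpace HY] [MeasurableSpace HZ]
    [NormedAddCommGroup GX] [InnerProductSpace ℝ GX] [CompleteSpace GX]
    [SecondCountableTopology GX] [MeasurableSpace GX] [BorelSpace GX]
    [NormedAddCommGroup GY] [InnerProductSpace ℝ GY] [CompleteSpace GY]
    [SecondCountableTopology GY] [MeasurableSpace GY] [BorelSpace GY]
    [NormedAddCommGroup GZ] [InnerProductSpace ℝ GZ] [CompleteSpace GZ]
    [SecondCountableTopology GZ] [MeasurableSpace GZ] [BorelSpace GZ]
    (X : Ω → HX) (Y : Ω → HY) (Z : Ω → HZ)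
    (hX : Measurable X) (hY : Measurable Y) (hZ : Measurable Z)
    (kX : HX → GX) (kY : HY → GY) (kZ : HZ → GZ)
    (hkX : Measurable kX) (hkY : Measurable kY) (hkZ : Measurable kZ)
    (hmX : Integrable (fun ω => ⟪kX (X ω), kX (X ω)⟫) P)
    (hmY : Integrable (fun ω => ⟪kY (Y ω), kY (Y ω)⟫) P)
    (hmZ : Integrable (fun ω => ⟪kZ (Z ω), kZ (Z ω)⟫) P)
    (hCEX : ∀ g : GX, ∃ h : GZ,
      (fun ω => ⟪kZ (Z ω), h⟫) =ᵐ[P]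
        condExp (MeasurableSpace.comap Z inferInstance) P (fun ω => ⟪kX (X ω), g⟫))
    (hCEY : ∀ g : GY, ∃ h : GZ,
      (fun ω => ⟪kZ (Z ω), h⟫) =ᵐ[P]
        condExp (MeasurableSpace.comap Z inferInstance) P (fun ω => ⟪kY (Y ω), g⟫))
    (dag : GZ →ₗ[ℝ] GZ)
    (hdag : IsMoorePenroseInv (crossCov P kZ Z kZ Z) dag) :
    -- Σ_{XY|Z} = E[(κ̃_X(·,X) − E[κ̃_X(·,X)|Z]) ⊗ (κ̃_Y(·,Y) − E[κ̃_Y(·,Y)|Z])]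
    ∀ v : GY,
      crossCov P kX X kY Y v - crossCov P kX X kZ Z (dag (crossCov P kZ Z kY Y v))
        = (∫ ω, rankOne
            (ctrKer P kX X (X ω) -
              condExp (MeasurableSpace.comap Z inferInstance) P (fun ω' => ctrKer P kX X (X ω')) ω)
            (ctrKer P kY Y (Y ω) -
              condExp (MeasurableSpace.comap Z inferInstance) P (fun ω' => ctrKer P kY Y (Y ω')) ω)
            ∂P) v := by
  intro v
  refine ext_inner_left ℝ fun f => ?_
  have hm : MeasurableSpace.comap Z inferInstance ≤ ‹MeasurableSpace Ω› := hZ.comap_le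
  have hX2 : MemLp (fun ω => kX (X ω)) 2 P :=
    memLp_two_of_integrable_inner_self (hkX.comp hX).aestronglyMeasurable hmX
  have hY2 : MemLp (fun ω => kY (Y ω)) 2 P :=
    memLp_two_of_integrable_inner_self (hkY.comp hY).aestronglyMeasurable hmY
  have hZ2 : MemLp (fun ω => kZ (Z ω)) 2 P :=
    memLp_two_of_integrable_inner_self (hkZ.comp hZ).aestronglyMeasurable hmZ
  have hZm : StronglyMeasurable[MeasurableSpace.comap Z inferInstance] fun ω => kZ (Z ω) :=
    hkZ.stronglyMeasurable.comp_measurable (Measurable.of_comap_le le_rfl)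
  obtain ⟨rf, hrepX⟩ := hCEX f
  obtain ⟨rv, hrepY⟩ := hCEY v
  replace hrepX := inner_ctrKer_ae_eq_condExp hm (hX2.integrable one_le_two)
    (hZ2.integrable one_le_two) hrepX
  replace hrepY := inner_ctrKer_ae_eq_condExp hm (hY2.integrable one_le_two)
    (hZ2.integrable one_le_two) hrepY
  have hZX := crossCov_eq_of_inner_ae_eq_condExp hm hX2 hZ2 hZm hrepX
  have hZY := crossCov_eq_of_inner_ae_eq_condExp hm hY2 hZ2 hZm hrepY
  calc _ = ⟪f, crossCov P kX X kY Y v⟫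
        - ⟪rf, crossCov P kZ Z kZ Z (dag (crossCov P kZ Z kZ Z rv))⟫ := by
        rw [inner_sub_right, inner_crossCov_comm hX2 hZ2, hZX, hZY,
          ← inner_crossCov_comm hZ2 hZ2]
    _ = ⟪f, crossCov P kX X kY Y v⟫ - ⟪rf, crossCov P kZ Z kZ Z rv⟫ := by rw [hdag.1]
    _ = _ := by
        rw [inner_integral_rankOne_sub_condExp_apply hm (memLp_ctrKer hX2) (memLp_ctrKer hY2),
          inner_crossCov_apply hX2 hY2, inner_crossCov_apply hZ2 hZ2]
        exact congrArg _ (integral_congr_ae (hrepX.mul hrepY))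

theorem statement3
    (P : Measure Ω) [IsProbabilityMeasure P]
    {HX HY HZ GX GY GZ : Type*}
    [NormedAddCommGroup HX] [InnerProductSpace ℝ HX] [CompleteSpace HX]
    [SecondCountableTopology HX] [MeasurableSpace HX] [BorelSpace HX]
    [NormedAddCommGroup HY] [InnerProductSpace ℝ HY] [CompleteSpace HY]
    [SecondCountableTopology HY] [MeasurableSpace HY] [BorelSpace HY]
    [NormedAddCommGroup HZ] [InnerProductSpace ℝ HZ] [CompleteSpace HZ]
    [SecondCountableTopology HZ] [MeasurableSpace HZ] [BorelSpace HZ]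
    [NormedAddCommGroup GX] [InnerProductSpace ℝ GX] [CompleteSpace GX]
    [SecondCountableTopology GX] [MeasurableSpace GX] [BorelSpace GX]
    [NormedAddCommGroup GY] [InnerProductSpace ℝ GY] [CompleteSpace GY]
    [SecondCountableTopology GY] [MeasurableSpace GY] [BorelSpace GY]
    [NormedAddCommGroup GZ] [InnerProductSpace ℝ GZ] [CompleteSpace GZ]
    [SecondCountableTopology GZ] [MeasurableSpace GZ] [BorelSpace GZ]
    (X : Ω → HX) (Y : Ω → HY) (Z : Ω → HZ)
    (hX : Measurable X) (hY : Measurable Y) (hZ : Measurable Z)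
    (kX : HX → GX) (kY : HY → GY) (kZ : HZ → GZ)
    (hkX : Measurable kX) (hkY : Measurable kY) (hkZ : Measurable kZ)
    (hdX : (Submodule.span ℝ (Set.range kX)).topologicalClosure = ⊤)
    (hdY : (Submodule.span ℝ (Set.range kY)).topologicalClosure = ⊤)
    (hdZ : (Submodule.span ℝ (Set.range kZ)).topologicalClosure = ⊤)
    (hmX : Integrable (fun ω => ⟪kX (X ω), kX (X ω)⟫) P)
    (hmY : Integrable (fun ω => ⟪kY (Y ω), kY (Y ω)⟫) P)
    (hmZ : Integrable (fun ω => ⟪kZ (Z ω), kZ (Z ω)⟫) P)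
    (hCEX : ∀ g : GX, ∃ h : GZ,
      (fun ω => ⟪kZ (Z ω), h⟫) =ᵐ[P]
        condExp (MeasurableSpace.comap Z inferInstance) P (fun ω => ⟪kX (X ω), g⟫))
    (hCEY : ∀ g : GY, ∃ h : GZ,
      (fun ω => ⟪kZ (Z ω), h⟫) =ᵐ[P]
        condExp (MeasurableSpace.comap Z inferInstance) P (fun ω => ⟪kY (Y ω), g⟫))
    (dag : GZ →ₗ[ℝ] GZ)
    (hdag : IsMoorePenroseInv (crossCov P kZ Z kZ Z) dag) :
    -- Σ_{XY|Z} = E[(κ̃_X(·,X) − E[κ̃_X(·,X)|Z]) ⊗ (κ̃_Y(·,Y) − E[κ̃_Y(·,Y)|Z])]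
    ∀ v : GY,
      crossCov P kX X kY Y v - crossCov P kX X kZ Z (dag (crossCov P kZ Z kY Y v))
        = (∫ ω, rankOne
            (ctrKer P kX X (X ω) -
              condExp (MeasurableSpace.comap Z inferInstance) P (fun ω' => ctrKer P kX X (X ω')) ω)
            (ctrKer P kY Y (Y ω) -
              condExp (MeasurableSpace.comap Z inferInstance) P (fun ω' => ctrKer P kY Y (Y ω')) ω)
            ∂P) v :=
  statement3_general P X Y Z hX hY hZ kX kY kZ hkX hkY hkZ hmX hmY hmZ hCEX hCEY dag hdag
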